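/- Let (M,ω) be a symplectic manifold and ζ : C_c(M) → ℝ a partial symplectic quasi-state. Then every ζ-heavy compact subset X of M is non-displaceable from every ζ-superheavy compact subset Y; in particular X ∩ Y ≠ ∅ and every ζ-superheavy subset is non-displaceable from itself. -/
import Mathlib


/- `(M, ω)` is a symplectic manifold; `Ham` denotes the set of compactly supported
Hamiltonian diffeomorphisms of `M`, and `Poisson` the relation of Poisson-commutation
of smooth functions on `M`. -/

open Set

noncomputable section

variable {M : Type*} [TopologicalSpace M] [T2Space M] [LocallyCompactSpace M]

/-- `X` is displaceable from `Y` by an element of `Ham`. -/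
def HDisplaceable {M : Type*} [TopologicalSpace M] (Ham : Set (M ≃ₜ M)) (X Y : Set M) : Prop :=
  ∃ φ ∈ Ham, Disjoint (φ '' X) (closure Y)

/-- A partial symplectic quasi-state on `M`, relative to the set `Ham` of compactly
supported Hamiltonian diffeomorphisms and the Poisson-commutation relation `Poisson`. -/
structure PSQS (M : Type*) [TopologicalSpace M] (Ham : Set (M ≃ₜ M))
    (Poisson : (M → ℝ) → (M → ℝ) → Prop) where
  val : (M → ℝ) → ℝ
  normalization : ∃ K : Set M, IsCompact K ∧ K.Nonempty ∧
    ∀ (a : ℝ) (F : M → ℝ), Continuous F → HasCompactSupport F →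
      (∀ x ∈ K, F x = a) → val F = a
  stability : ∀ F G : M → ℝ, Continuous F → HasCompactSupport F →
      Continuous G → HasCompactSupport G →
      sInf (Set.range fun x => F x - G x) ≤ val F - val G ∧
      val F - val G ≤ sSup (Set.range fun x => F x - G x)
  semihomogeneity : ∀ s : ℝ, 0 < s → ∀ F : M → ℝ, Continuous F → HasCompactSupport F →
    val (fun x => s * F x) = s * val F
  hamiltonianInvariance : ∀ φ ∈ Ham, ∀ F : M → ℝ, Continuous F → HasCompactSupport F →
    val (fun x => F (φ x)) = val F
  vanishing : ∀ F : M → ℝ, Continuous F → HasCompactSupport F →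
    HDisplaceable Ham (tsupport F) (tsupport F) → val F = 0
  quasiSubadditivity : ∀ F G : M → ℝ, Continuous F → HasCompactSupport F →
    Continuous G → HasCompactSupport G → Poisson F G →
    val (fun x => F x + G x) ≤ val F + val G

/-- A compact subset `X` is `ζ`-heavy if `ζ(F) ≥ inf_X F` for all compactly
supported continuous `F`. -/
def Heavy {M : Type*} [TopologicalSpace M] {Ham : Set (M ≃ₜ M)}
    {Poisson : (M → ℝ) → (M → ℝ) → Prop} (ζ : PSQS M Ham Poisson) (X : Set M) : Prop :=
  ∀ F : M → ℝ, Continuous F → HasCompactSupport F → sInf (F '' X) ≤ ζ.val F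

/-- A compact subset `X` is `ζ`-superheavy if `ζ(F) ≤ sup_X F` for all compactly
supported continuous `F`. -/
def Superheavy {M : Type*} [TopologicalSpace M] {Ham : Set (M ≃ₜ M)}
    {Poisson : (M → ℝ) → (M → ℝ) → Prop} (ζ : PSQS M Ham Poisson) (X : Set M) : Prop :=
  ∀ F : M → ℝ, Continuous F → HasCompactSupport F → ζ.val F ≤ sSup (F '' X)


section Aux

variable {Ham : Set (M ≃ₜ M)} {Poisson : (M → ℝ) → (M → ℝ) → Prop}

lemma psqs_heavy_nonempty (ζ : PSQS M Ham Poisson) {X : Set M} (hX : Heavy ζ X) :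
    X.Nonempty := by
  obtain ⟨K, hK, hKne, hnorm⟩ := ζ.normalization
  obtain ⟨f, hf1, -, hfc, -⟩ :=
    exists_continuous_one_zero_of_isCompact hK isClosed_empty (disjoint_empty K)
  have hFc : Continuous fun x => -(f x) := f.continuous.neg
  have hFs : HasCompactSupport fun x => -(f x) := hfc.comp_left (g := Neg.neg) neg_zero
  have hval : ζ.val (fun x => -(f x)) = -1 :=
    hnorm (-1) _ hFc hFs (fun x hx => by simp [hf1 hx])
  by_contra h
  have hXe : X = ∅ := not_nonempty_iff_eq_empty.mp h
  have := hX _ hFc hFs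
  rw [hXe, Set.image_empty, Real.sInf_empty, hval] at this
  linarith

lemma psqs_superheavy_nonempty (ζ : PSQS M Ham Poisson) {Z : Set M} (hZ : Superheavy ζ Z) :
    Z.Nonempty := by
  obtain ⟨K, hK, hKne, hnorm⟩ := ζ.normalization
  obtain ⟨f, hf1, -, hfc, -⟩ :=
    exists_continuous_one_zero_of_isCompact hK isClosed_empty (disjoint_empty K)
  have hval : ζ.val f = 1 := hnorm 1 _ f.continuous hfc (fun x hx => by simp [hf1 hx])
  by_contra h
  have hZe : Z = ∅ := not_nonempty_iff_eq_empty.mp h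
  have := hZ _ f.continuous hfc
  rw [hZe, Set.image_empty, Real.sSup_empty, hval] at this
  linarith

lemma psqs_not_displaceable (ζ : PSQS M Ham Poisson) {X Y : Set M}
    (hX : IsCompact X) (hY : IsCompact Y) (hheavy : Heavy ζ X) (hsh : Superheavy ζ Y) :
    ¬ HDisplaceable Ham X Y := by
  rintro ⟨φ, hφ, hdisj⟩
  have hXne : X.Nonempty := psqs_heavy_nonempty ζ hheavy
  rw [hY.isClosed.closure_eq] at hdisj
  obtain ⟨f, hf1, hf0, hfc, -⟩ :=
    exists_continuous_one_zero_of_isCompact (hX.image φ.continuous) hY.isClosed hdisj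
  have hFc : Continuous (f : M → ℝ) := f.continuous
  have h1 : ζ.val f ≤ 0 := by
    refine le_trans (hsh f hFc hfc) (Real.sSup_le ?_ le_rfl)
    rintro x ⟨y, hy, rfl⟩
    simp [hf0 hy]
  have hGc : Continuous fun x => f (φ x) := hFc.comp φ.continuous
  have hGs : HasCompactSupport fun x => f (φ x) := hfc.comp_homeomorph φ
  have h2 : (1 : ℝ) ≤ ζ.val fun x => f (φ x) := by
    refine le_trans (le_csInf (hXne.image _) ?_) (hheavy _ hGc hGs)
    rintro b ⟨y, hy, rfl⟩
    have : f (φ y) = 1 := hf1 (Set.mem_image_of_mem φ hy)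
    simp [this]
  rw [ζ.hamiltonianInvariance φ hφ f hFc hfc] at h2
  linarith

lemma psqs_superheavy_not_self_displaceable (ζ : PSQS M Ham Poisson) {Z : Set M}
    (hZ : IsCompact Z) (hs : Superheavy ζ Z) : ¬ HDisplaceable Ham Z Z := by
  rintro ⟨φ, hφ, hdisj⟩
  have hZne : Z.Nonempty := psqs_superheavy_nonempty ζ hs
  rw [hZ.isClosed.closure_eq] at hdisj
  obtain ⟨V, W, hV, hW, hsubV, hsubW, hVW⟩ :=
    SeparatedNhds.of_isCompact_isCompact (hZ.image φ.continuous) hZ hdisj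
  set U : Set M := W ∩ φ ⁻¹' V with hU
  have hUopen : IsOpen U := hW.inter (hV.preimage φ.continuous)
  have hZU : Z ⊆ U := fun z hz => ⟨hsubW hz, hsubV (Set.mem_image_of_mem φ hz)⟩
  obtain ⟨k, k_comp, k_closed, hZk, hkU⟩ := exists_compact_closed_between hZ hUopen hZU
  obtain ⟨f, hf1, hf0, hfc, -⟩ :=
    exists_continuous_one_zero_of_isCompact hZ isOpen_interior.isClosed_compl
      (disjoint_compl_right_iff_subset.mpr hZk)
  have hsupp : tsupport f ⊆ k := by
    refine (closure_minimal ?_ k_closed)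
    intro x hx
    by_contra hxk
    exact hx (hf0 fun hxi => hxk (interior_subset hxi))
  have hsuppU : tsupport f ⊆ U := hsupp.trans hkU
  set g : M → ℝ := fun x => -(f x) with hg
  have hgc : Continuous g := f.continuous.neg
  have hgs : HasCompactSupport g := hfc.comp_left (g := Neg.neg) neg_zero
  have hgsupp : tsupport g = tsupport f :=
    congrArg closure (Function.support_neg fun x => f x)
  have hdisp : HDisplaceable Ham (tsupport g) (tsupport g) := by
    refine ⟨φ, hφ, ?_⟩
    rw [hgsupp, (isClosed_tsupport f).closure_eq]
    refine Set.disjoint_of_subset ?_ ?_ hVW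
    · exact Set.image_subset_iff.mpr fun x hx => (hsuppU hx).2
    · exact fun x hx => (hsuppU hx).1
  have hvan : ζ.val g = 0 := ζ.vanishing g hgc hgs hdisp
  have hle : ζ.val g ≤ -1 := by
    refine le_trans (hs g hgc hgs) (csSup_le (hZne.image g) ?_)
    rintro b ⟨y, hy, rfl⟩
    have : f y = 1 := hf1 hy
    simp [hg, this]
  linarith

end Aux

/-- Every `ζ`-heavy compact subset `X` is non-displaceable from every `ζ`-superheavy
compact subset `Y`; in particular `X ∩ Y ≠ ∅`, and every `ζ`-superheavy compact subset
is non-displaceable from itself. -/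
theorem heavy_nondisplaceable_from_superheavy (Ham : Set (M ≃ₜ M))
    (Poisson : (M → ℝ) → (M → ℝ) → Prop) (ζ : PSQS M Ham Poisson)
    (X Y : Set M) (hX : IsCompact X) (hY : IsCompact Y)
    (hheavy : Heavy ζ X) (hsh : Superheavy ζ Y) :
    (¬ HDisplaceable Ham X Y) ∧ (X ∩ Y).Nonempty ∧
      ∀ Z : Set M, IsCompact Z → Superheavy ζ Z → ¬ HDisplaceable Ham Z Z := by
  refine ⟨psqs_not_displaceable ζ hX hY hheavy hsh, ?_,
    fun Z hZc hZs => psqs_superheavy_not_self_displaceable ζ hZc hZs⟩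
  by_contra h
  have hd : Disjoint X Y :=
    Set.disjoint_iff_inter_eq_empty.mpr (Set.not_nonempty_iff_eq_empty.mp h)
  have hXne : X.Nonempty := psqs_heavy_nonempty ζ hheavy
  obtain ⟨f, hf1, hf0, hfc, -⟩ :=
    exists_continuous_one_zero_of_isCompact hX hY.isClosed hd
  have h1 : ζ.val f ≤ 0 := by
    refine le_trans (hsh f f.continuous hfc) (Real.sSup_le ?_ le_rfl)
    rintro x ⟨y, hy, rfl⟩
    simp [hf0 hy]
  have h2 : (1 : ℝ) ≤ ζ.val f := by
    refine le_trans (le_csInf (hXne.image _) ?_) (hheavy _ f.continuous hfc)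
    rintro b ⟨y, hy, rfl⟩
    simp [hf1 hy]
  linarith
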